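/- Let μ and (μⁿ)_{n≥1} be probability measures on ℝ with uniformly bounded first moments, and suppose the call price functions c_n(K) := ∫(x−K)^+ dμⁿ converge to c(K) := ∫(x−K)^+ dμ for every K in a dense subset D of ℝ. Then ∫ f dμⁿ → ∫ f dμ for every C² function f with compact support. -/

import Mathlib

open MeasureTheory Filter Topology

/-!
By Taylor's formula with integral remainder, a compactly supported `C²` function is a superposition
of calls, `f x = ∫ f''(K) (x - K)⁺ dK`. By Fubini, `∫ f dν = ∫ f''(K) c_ν(K) dK` for every probability
measure `ν` with a first moment. The call price functions are all `1`-Lipschitz, hence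
equicontinuous, so convergence on the dense set `D` upgrades to convergence everywhere; the bound
`c_ν(K) ≤ ∫ |x| dν + |K|` then lets dominated convergence pass to the limit in `∫ f''(K) c_n(K) dK`.
-/

noncomputable def callPrice (ν : Measure ℝ) (K : ℝ) : ℝ := ∫ x, max (x - K) 0 ∂ν

section CallPrice

variable {ν : Measure ℝ}

lemma max_sub_le_abs_add_abs (x K : ℝ) : max (x - K) 0 ≤ |x| + |K| :=
  max_le ((le_abs_self _).trans (abs_sub _ _)) (by positivity)

lemma integrable_max_sub [IsFiniteMeasure ν] (hν : Integrable (fun x => |x|) ν) (K : ℝ) :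
    Integrable (fun x => max (x - K) 0) ν :=
  (hν.add (integrable_const |K|)).mono' (by fun_prop) <| Eventually.of_forall fun x => by
    rw [Real.norm_of_nonneg (le_max_right _ _)]
    exact max_sub_le_abs_add_abs x K

lemma callPrice_nonneg (K : ℝ) : 0 ≤ callPrice ν K :=
  integral_nonneg fun _ => le_max_right _ _

lemma callPrice_le [IsProbabilityMeasure ν] (hν : Integrable (fun x => |x|) ν) (K : ℝ) :
    callPrice ν K ≤ ∫ x, |x| ∂ν + |K| :=
  calc callPrice ν K ≤ ∫ x, |x| + |K| ∂ν :=
        integral_mono (integrable_max_sub hν K) (hν.add (integrable_const _))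
          fun x => max_sub_le_abs_add_abs x K
    _ = ∫ x, |x| ∂ν + |K| := by simp [integral_add hν (integrable_const _)]

lemma lipschitzWith_callPrice [IsProbabilityMeasure ν] (hν : Integrable (fun x => |x|) ν) :
    LipschitzWith 1 (callPrice ν) := by
  refine LipschitzWith.of_dist_le_mul fun K K' => ?_
  rw [Real.dist_eq, Real.dist_eq, NNReal.coe_one, one_mul, callPrice, callPrice,
    ← integral_sub (integrable_max_sub hν K) (integrable_max_sub hν K')]
  have hpt : ∀ x, ‖max (x - K) 0 - max (x - K') 0‖ ≤ |K - K'| := fun x =>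
    (abs_max_sub_max_le_abs _ _ _).trans_eq (by rw [abs_sub_comm]; congr 1; ring)
  simpa using norm_integral_le_of_norm_le_const (μ := ν) (Eventually.of_forall hpt)

lemma tendsto_callPrice_of_dense {ι : Type*} {l : Filter ι} {μ : Measure ℝ} {μs : ι → Measure ℝ}
    [IsProbabilityMeasure μ] [∀ i, IsProbabilityMeasure (μs i)]
    (hμ : Integrable (fun x => |x|) μ) (hμs : ∀ i, Integrable (fun x => |x|) (μs i))
    {D : Set ℝ} (hD : Dense D)
    (hconv : ∀ K ∈ D, Tendsto (fun i => callPrice (μs i) K) l (𝓝 (callPrice μ K))) (K : ℝ) :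
    Tendsto (fun i => callPrice (μs i) K) l (𝓝 (callPrice μ K)) := by
  have hequi : Equicontinuous fun i => callPrice (μs i) :=
    (LipschitzWith.uniformEquicontinuous _ 1 fun i => lipschitzWith_callPrice (hμs i)).equicontinuous
  exact (hequi K).tendsto_of_mem_closure
    (lipschitzWith_callPrice hμ).continuous.continuousWithinAt hconv
    (hD.closure_eq ▸ Set.mem_univ K)

end CallPrice

lemma intervalIntegral_sub_mul_deriv_deriv {f : ℝ → ℝ} (hf : ContDiff ℝ 2 f) (a x : ℝ) :
    ∫ K in a..x, (x - K) * deriv (deriv f) K = f x - f a - (x - a) * deriv f a := by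
  have hf' : ContDiff ℝ 1 (deriv f) := (contDiff_succ_iff_deriv (n := 1)).mp hf |>.2.2
  rw [intervalIntegral.integral_mul_deriv_eq_deriv_mul (u := fun K => x - K) (u' := fun _ => -1)
      (fun K _ => (hasDerivAt_id K).const_sub x)
      (fun K _ => (hf'.differentiable one_ne_zero K).hasDerivAt)
      intervalIntegrable_const ((hf'.continuous_deriv le_rfl).intervalIntegrable _ _)]
  simp only [neg_one_mul, intervalIntegral.integral_neg]
  rw [intervalIntegral.integral_deriv_eq_sub (fun K _ => hf.differentiable (by norm_num) K)
    ((hf.continuous_deriv (by norm_num)).intervalIntegrable _ _)]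
  ring

lemma HasCompactSupport.eq_integral_deriv_deriv_mul_max_sub {f : ℝ → ℝ} (hf : ContDiff ℝ 2 f)
    (hsupp : HasCompactSupport f) (x : ℝ) :
    f x = ∫ K, deriv (deriv f) K * max (x - K) 0 := by
  obtain ⟨b, hb⟩ := hsupp.isCompact.bddBelow
  set a := min (b - 1) x
  have hax : a ≤ x := min_le_right _ _
  have hvanish : ∀ K ≤ a, K ∉ tsupport f := fun K hK h => by
    linarith [hb h, min_le_left (b - 1) x]
  have hfa : f a = 0 := image_eq_zero_of_notMem_tsupport (hvanish a le_rfl)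
  have hf'a : deriv f a = 0 :=
    image_eq_zero_of_notMem_tsupport fun h => hvanish a le_rfl (tsupport_deriv_subset h)
  have hf'' : ∀ K ≤ a, deriv (deriv f) K = 0 := fun K hK =>
    image_eq_zero_of_notMem_tsupport fun h =>
      hvanish K hK (tsupport_deriv_subset (tsupport_deriv_subset h))
  have hIoc : ∫ K, deriv (deriv f) K * max (x - K) 0
      = ∫ K in Set.Ioc a x, deriv (deriv f) K * max (x - K) 0 := by
    refine (setIntegral_eq_integral_of_forall_compl_eq_zero fun K hK => ?_).symm
    rcases le_or_gt K a with hKa | haK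
    · rw [hf'' K hKa, zero_mul]
    · rw [max_eq_right (by linarith [not_le.mp fun h => hK ⟨haK, h⟩]), mul_zero]
  rw [hIoc, ← intervalIntegral.integral_of_le hax]
  rw [intervalIntegral.integral_congr (g := fun K => (x - K) * deriv (deriv f) K) fun K hK => ?_,
    intervalIntegral_sub_mul_deriv_deriv hf, hfa, hf'a]
  · ring
  · rw [Set.uIcc_of_le hax] at hK
    simp only [max_eq_left (sub_nonneg.mpr hK.2), mul_comm]

lemma ContDiff.continuous_deriv_deriv {f : ℝ → ℝ} (hf : ContDiff ℝ 2 f) :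
    Continuous (deriv (deriv f)) :=
  ((contDiff_succ_iff_deriv (n := 1)).mp hf).2.2.continuous_deriv le_rfl

lemma integral_eq_integral_deriv_deriv_mul_callPrice {ν : Measure ℝ} [IsProbabilityMeasure ν]
    (hν : Integrable (fun x => |x|) ν) {f : ℝ → ℝ} (hf : ContDiff ℝ 2 f)
    (hsupp : HasCompactSupport f) :
    ∫ x, f x ∂ν = ∫ K, deriv (deriv f) K * callPrice ν K := by
  set g := deriv (deriv f)
  have hg : Continuous g := hf.continuous_deriv_deriv
  have hgK : Integrable (fun K => |g K| * (|K| + 1)) :=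
    (hg.abs.mul (continuous_abs.add continuous_const)).integrable_of_hasCompactSupport
      hsupp.deriv.deriv.abs.mul_right
  have hprod : Integrable (fun p : ℝ × ℝ => g p.2 * max (p.1 - p.2) 0) (ν.prod volume) := by
    refine ((hν.add (integrable_const 1)).mul_prod hgK).mono' (by fun_prop)
      (Eventually.of_forall fun p => ?_)
    have hmax : max (p.1 - p.2) 0 ≤ (|p.1| + 1) * (|p.2| + 1) := by
      nlinarith [max_sub_le_abs_add_abs p.1 p.2, abs_nonneg p.1, abs_nonneg p.2]
    rw [norm_mul, Real.norm_eq_abs, Real.norm_of_nonneg (le_max_right _ _)]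
    calc |g p.2| * max (p.1 - p.2) 0 ≤ |g p.2| * ((|p.1| + 1) * (|p.2| + 1)) :=
          mul_le_mul_of_nonneg_left hmax (abs_nonneg _)
      _ = (|p.1| + 1) * (|g p.2| * (|p.2| + 1)) := by ring
  calc ∫ x, f x ∂ν = ∫ x, (∫ K, g K * max (x - K) 0) ∂ν :=
        integral_congr_ae (Eventually.of_forall (hsupp.eq_integral_deriv_deriv_mul_max_sub hf))
    _ = ∫ K, ∫ x, g K * max (x - K) 0 ∂ν := integral_integral_swap hprod
    _ = ∫ K, g K * callPrice ν K := by simp only [integral_const_mul, callPrice]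

theorem stmt_4 (μ : Measure ℝ) (μs : ℕ → Measure ℝ)
    [IsProbabilityMeasure μ] [∀ n, IsProbabilityMeasure (μs n)]
    (hμ : Integrable (fun x : ℝ => |x|) μ)
    (hμs : ∀ n, Integrable (fun x : ℝ => |x|) (μs n))
    (M : ℝ) (hbnd : ∀ n, (∫ x, |x| ∂(μs n)) ≤ M)
    (D : Set ℝ) (hD : Dense D)
    (hconv : ∀ K ∈ D,
      Tendsto (fun n => ∫ x, max (x - K) 0 ∂(μs n)) atTop
        (nhds (∫ x, max (x - K) 0 ∂μ)))
    (f : ℝ → ℝ) (hf : ContDiff ℝ 2 f) (hsupp : HasCompactSupport f) :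
    Tendsto (fun n => ∫ x, f x ∂(μs n)) atTop (nhds (∫ x, f x ∂μ)) := by
  set g := deriv (deriv f)
  have hg : Continuous g := hf.continuous_deriv_deriv
  have hcall := tendsto_callPrice_of_dense hμ hμs hD hconv
  simp_rw [integral_eq_integral_deriv_deriv_mul_callPrice (hμs _) hf hsupp,
    integral_eq_integral_deriv_deriv_mul_callPrice hμ hf hsupp]
  refine tendsto_integral_of_dominated_convergence (fun K => |g K| * (M + |K|))
    (fun n => (hg.mul (lipschitzWith_callPrice (hμs n)).continuous).aestronglyMeasurable)
    ((hg.abs.mul (continuous_const.add continuous_abs)).integrable_of_hasCompactSupport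
      hsupp.deriv.deriv.abs.mul_right)
    (fun n => Eventually.of_forall fun K => ?_) (Eventually.of_forall fun K => (hcall K).const_mul _)
  rw [norm_mul, Real.norm_eq_abs, Real.norm_of_nonneg (callPrice_nonneg K)]
  exact mul_le_mul_of_nonneg_left ((callPrice_le (hμs n) K).trans (by linarith [hbnd n]))
    (abs_nonneg _)
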